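/- (Main theorem: the majorization update does not increase stress formula two.) Let Y be a configuration with η₂²(Y) > 0, σ₂(Y) ≤ 1, and d_ij(Y) > 0 for every pair i < j with w_ij > 0. Define ξ(X,Y) := η²(Δ) + (1 − σ₂(Y))·η₁²(X) − 2·Σ_{i<j} w_ij δ_ij ⟨X i − X j, Y i − Y j⟩/d_ij(Y) + σ₂(Y)·d̄(Y)·Σ_{i<j} w_ij d_ij(X)²/d_ij(Y). If X* is a configuration with η₂²(X*) > 0 that minimizes ξ(·,Y), i.e. ξ(X*,Y) ≤ ξ(X,Y) for every configuration X, then σ₂(X*) ≤ σ₂(Y). -/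

import Mathlib

open scoped BigOperators

/-- Distance between points `i` and `j` of a configuration. -/
noncomputable def confDist {n p : ℕ} (X : Fin n → EuclideanSpace ℝ (Fin p))
    (i j : Fin n) : ℝ := ‖X i - X j‖

/-- Sum of `f i j` over all pairs `i < j`. -/
noncomputable def pairSum (n : ℕ) (f : Fin n → Fin n → ℝ) : ℝ :=
  ∑ i : Fin n, ∑ j : Fin n, if i < j then f i j else 0

/-- Raw stress. -/
noncomputable def sigmaR {n p : ℕ} (w δ : Fin n → Fin n → ℝ)
    (X : Fin n → EuclideanSpace ℝ (Fin p)) : ℝ :=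
  pairSum n (fun i j => w i j * (δ i j - confDist X i j) ^ 2)

/-- `η₁²`. -/
noncomputable def eta1sq {n p : ℕ} (w : Fin n → Fin n → ℝ)
    (X : Fin n → EuclideanSpace ℝ (Fin p)) : ℝ :=
  pairSum n (fun i j => w i j * confDist X i j ^ 2)

/-- Mean of the distances. -/
noncomputable def dbar {n p : ℕ} (w : Fin n → Fin n → ℝ)
    (X : Fin n → EuclideanSpace ℝ (Fin p)) : ℝ :=
  pairSum n (fun i j => w i j * confDist X i j)

/-- Variance of the distances, `η₂²`. -/
noncomputable def eta2sq {n p : ℕ} (w : Fin n → Fin n → ℝ)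
    (X : Fin n → EuclideanSpace ℝ (Fin p)) : ℝ :=
  pairSum n (fun i j => w i j * (confDist X i j - dbar w X) ^ 2)

/-- `η²(Δ)`. -/
noncomputable def etaDeltaSq (n : ℕ) (w δ : Fin n → Fin n → ℝ) : ℝ :=
  pairSum n (fun i j => w i j * δ i j ^ 2)

/-- Kruskal's stress formula two. -/
noncomputable def sigma2 {n p : ℕ} (w δ : Fin n → Fin n → ℝ)
    (X : Fin n → EuclideanSpace ℝ (Fin p)) : ℝ :=
  sigmaR w δ X / eta2sq w X

/-- The Dinkelbach difference `ω(X,Y)`. -/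
noncomputable def omegaFun {n p : ℕ} (w δ : Fin n → Fin n → ℝ)
    (X Y : Fin n → EuclideanSpace ℝ (Fin p)) : ℝ :=
  sigmaR w δ X - sigma2 w δ Y * eta2sq w X

/-- The quadratic majorizer `ξ(X,Y)`. -/
noncomputable def xiFun {n p : ℕ} (w δ : Fin n → Fin n → ℝ)
    (X Y : Fin n → EuclideanSpace ℝ (Fin p)) : ℝ :=
  etaDeltaSq n w δ + (1 - sigma2 w δ Y) * eta1sq w X -
    2 * pairSum n (fun i j =>
      w i j * δ i j * (inner ℝ (X i - X j) (Y i - Y j) : ℝ) / confDist Y i j) +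
    sigma2 w δ Y * dbar w Y *
      pairSum n (fun i j => w i j * confDist X i j ^ 2 / confDist Y i j)


/-!
Dinkelbach's reformulation: for `η₂²(X) > 0`, `σ₂(X) ≤ σ₂(Y)` exactly when
`ω(X,Y) = σ_R(X) - σ₂(Y) η₂²(X) ≤ 0`, and `ω(Y,Y) = 0`. Using `Σ w = 1`, `ω(·,Y)` expands to
`η²(Δ) + (1 - σ₂(Y)) η₁² - 2 Σ w δ d + σ₂(Y) d̄²`, and `ξ(·,Y)` majorizes it: Cauchy–Schwarz
in `ℝᵖ` bounds the cross term, and Cauchy–Schwarz for the weights `w d(Y)` bounds `d̄²`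
(this needs `σ₂(Y) ≥ 0`). Both bounds are equalities at `X = Y`, so
`ω(X*,Y) ≤ ξ(X*,Y) ≤ ξ(Y,Y) = ω(Y,Y) = 0`.
-/

open Finset

section PairSum

variable {n : ℕ}

theorem pairSum_eq_sum_filter (f : Fin n → Fin n → ℝ) :
    pairSum n f = ∑ q ∈ univ.filter (fun q : Fin n × Fin n => q.1 < q.2), f q.1 q.2 := by
  rw [sum_filter, ← univ_product_univ, sum_product]
  rfl

theorem pairSum_le_pairSum {f g : Fin n → Fin n → ℝ}
    (h : ∀ i j, i < j → f i j ≤ g i j) : pairSum n f ≤ pairSum n g := by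
  simp only [pairSum_eq_sum_filter]
  exact sum_le_sum fun q hq => h q.1 q.2 (mem_filter.1 hq).2

theorem pairSum_nonneg {f : Fin n → Fin n → ℝ} (h : ∀ i j, i < j → 0 ≤ f i j) :
    0 ≤ pairSum n f := by
  simp only [pairSum_eq_sum_filter]
  exact sum_nonneg fun q hq => h q.1 q.2 (mem_filter.1 hq).2

theorem pairSum_add (f g : Fin n → Fin n → ℝ) :
    pairSum n (fun i j => f i j + g i j) = pairSum n f + pairSum n g := by
  simp only [pairSum_eq_sum_filter, sum_add_distrib]

theorem pairSum_sub (f g : Fin n → Fin n → ℝ) :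
    pairSum n (fun i j => f i j - g i j) = pairSum n f - pairSum n g := by
  simp only [pairSum_eq_sum_filter, sum_sub_distrib]

theorem mul_pairSum (c : ℝ) (f : Fin n → Fin n → ℝ) :
    c * pairSum n f = pairSum n (fun i j => c * f i j) := by
  simp only [pairSum_eq_sum_filter, mul_sum]

theorem sq_pairSum_le_mul_pairSum {r f g : Fin n → Fin n → ℝ}
    (hf : ∀ i j, i < j → 0 ≤ f i j) (hg : ∀ i j, i < j → 0 ≤ g i j)
    (hr : ∀ i j, i < j → r i j ^ 2 ≤ f i j * g i j) :
    pairSum n r ^ 2 ≤ pairSum n f * pairSum n g := by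
  simp only [pairSum_eq_sum_filter]
  exact sum_sq_le_sum_mul_sum_of_sq_le_mul _ (fun q hq => hf q.1 q.2 (mem_filter.1 hq).2)
    (fun q hq => hg q.1 q.2 (mem_filter.1 hq).2) (fun q hq => hr q.1 q.2 (mem_filter.1 hq).2)

end PairSum

theorem real_inner_div_norm_le_norm {E : Type*} [NormedAddCommGroup E] [InnerProductSpace ℝ E]
    (x y : E) : inner ℝ x y / ‖y‖ ≤ ‖x‖ := by
  rcases (norm_nonneg y).eq_or_lt with hy | hy
  · simp [← hy]
  · rw [div_le_iff₀ hy]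
    exact real_inner_le_norm x y

section Stress

variable {n p : ℕ} {w δ : Fin n → Fin n → ℝ}

theorem sigmaR_eq (X : Fin n → EuclideanSpace ℝ (Fin p)) :
    sigmaR w δ X = etaDeltaSq n w δ + eta1sq w X -
      2 * pairSum n (fun i j => w i j * δ i j * confDist X i j) := by
  have hsplit : sigmaR w δ X = pairSum n (fun i j => w i j * δ i j ^ 2 +
      w i j * confDist X i j ^ 2 - 2 * (w i j * δ i j * confDist X i j)) := by
    unfold sigmaR
    congr 1
    ext i j
    ring
  rw [hsplit, pairSum_sub, pairSum_add, ← mul_pairSum, etaDeltaSq, eta1sq]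

theorem eta2sq_eq (hw1 : pairSum n w = 1) (X : Fin n → EuclideanSpace ℝ (Fin p)) :
    eta2sq w X = eta1sq w X - dbar w X ^ 2 := by
  have hsplit : eta2sq w X = pairSum n (fun i j => w i j * confDist X i j ^ 2 -
      2 * dbar w X * (w i j * confDist X i j) + dbar w X ^ 2 * w i j) := by
    unfold eta2sq
    congr 1
    ext i j
    ring
  rw [hsplit, pairSum_add, pairSum_sub, ← mul_pairSum, ← mul_pairSum, hw1, ← eta1sq, ← dbar]
  ring

theorem sigma2_nonneg (hw : ∀ i j, i < j → 0 ≤ w i j)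
    (X : Fin n → EuclideanSpace ℝ (Fin p)) : 0 ≤ sigma2 w δ X :=
  div_nonneg (pairSum_nonneg fun i j hij => mul_nonneg (hw i j hij) (sq_nonneg _))
    (pairSum_nonneg fun i j hij => mul_nonneg (hw i j hij) (sq_nonneg _))

theorem omegaFun_eq (hw1 : pairSum n w = 1) (X Y : Fin n → EuclideanSpace ℝ (Fin p)) :
    omegaFun w δ X Y = etaDeltaSq n w δ + (1 - sigma2 w δ Y) * eta1sq w X -
      2 * pairSum n (fun i j => w i j * δ i j * confDist X i j) +
      sigma2 w δ Y * dbar w X ^ 2 := by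
  rw [omegaFun, sigmaR_eq, eta2sq_eq hw1]
  ring

theorem pairSum_inner_div_le (hw : ∀ i j, i < j → 0 ≤ w i j)
    (hδ : ∀ i j, i < j → 0 ≤ δ i j) (X Y : Fin n → EuclideanSpace ℝ (Fin p)) :
    pairSum n (fun i j => w i j * δ i j * inner ℝ (X i - X j) (Y i - Y j) / confDist Y i j) ≤
      pairSum n (fun i j => w i j * δ i j * confDist X i j) := by
  refine pairSum_le_pairSum fun i j hij => ?_
  rw [mul_div_assoc]
  exact mul_le_mul_of_nonneg_left (real_inner_div_norm_le_norm _ _)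
    (mul_nonneg (hw i j hij) (hδ i j hij))

theorem dbar_sq_le (hw : ∀ i j, i < j → 0 ≤ w i j) (X Y : Fin n → EuclideanSpace ℝ (Fin p))
    (hYd : ∀ i j, i < j → 0 < w i j → 0 < confDist Y i j) :
    dbar w X ^ 2 ≤
      dbar w Y * pairSum n (fun i j => w i j * confDist X i j ^ 2 / confDist Y i j) := by
  refine sq_pairSum_le_mul_pairSum
    (fun i j hij => mul_nonneg (hw i j hij) (norm_nonneg _))
    (fun i j hij => div_nonneg (mul_nonneg (hw i j hij) (sq_nonneg _)) (norm_nonneg _))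
    fun i j hij => ?_
  rcases (hw i j hij).eq_or_lt with hw0 | hw0
  · simp [← hw0]
  · have hdY := hYd i j hij hw0
    apply le_of_eq
    field_simp

theorem omegaFun_le_xiFun (hw : ∀ i j, i < j → 0 ≤ w i j) (hw1 : pairSum n w = 1)
    (hδ : ∀ i j, i < j → 0 ≤ δ i j) (X Y : Fin n → EuclideanSpace ℝ (Fin p))
    (hYd : ∀ i j, i < j → 0 < w i j → 0 < confDist Y i j) :
    omegaFun w δ X Y ≤ xiFun w δ X Y := by
  have hdbar := mul_le_mul_of_nonneg_left (dbar_sq_le hw X Y hYd) (sigma2_nonneg (δ := δ) hw Y)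
  rw [omegaFun_eq hw1, xiFun, mul_assoc (sigma2 w δ Y)]
  linarith [pairSum_inner_div_le hw hδ X Y]

theorem xiFun_self (hw1 : pairSum n w = 1) (Y : Fin n → EuclideanSpace ℝ (Fin p)) :
    xiFun w δ Y Y = omegaFun w δ Y Y := by
  have hcross : pairSum n (fun i j => w i j * δ i j * inner ℝ (Y i - Y j) (Y i - Y j) /
      confDist Y i j) = pairSum n (fun i j => w i j * δ i j * confDist Y i j) := by
    congr 1
    ext i j
    -- `d * d / d = d` also at `d = 0`, where `0 / 0 = 0`
    rw [real_inner_self_eq_norm_sq, mul_div_assoc, sq, ← confDist, mul_self_div_self]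
  have hmean : pairSum n (fun i j => w i j * confDist Y i j ^ 2 / confDist Y i j) = dbar w Y := by
    rw [dbar]
    congr 1
    ext i j
    rw [mul_div_assoc, sq, mul_self_div_self]
  rw [xiFun, hcross, hmean, omegaFun_eq hw1]
  ring

theorem omegaFun_self {Y : Fin n → EuclideanSpace ℝ (Fin p)} (hY : eta2sq w Y ≠ 0) :
    omegaFun w δ Y Y = 0 := by
  rw [omegaFun, sigma2, div_mul_cancel₀ _ hY, sub_self]

theorem sigma2_le_of_omegaFun_nonpos {X Y : Fin n → EuclideanSpace ℝ (Fin p)}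
    (hX : 0 < eta2sq w X) (h : omegaFun w δ X Y ≤ 0) : sigma2 w δ X ≤ sigma2 w δ Y := by
  rw [sigma2, div_le_iff₀ hX]
  rw [omegaFun] at h
  linarith

end Stress

theorem majorization_update_decreases_stress2_general
    {n p : ℕ}
    (w δ : Fin n → Fin n → ℝ)
    (hw : ∀ i j : Fin n, i < j → 0 ≤ w i j)
    (hw1 : pairSum n w = 1)
    (hδ : ∀ i j : Fin n, i < j → 0 ≤ δ i j)
    (Y : Fin n → EuclideanSpace ℝ (Fin p))
    (hY2 : 0 < eta2sq w Y)
    (hYd : ∀ i j : Fin n, i < j → 0 < w i j → 0 < confDist Y i j)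
    (Xstar : Fin n → EuclideanSpace ℝ (Fin p))
    (hXstar2 : 0 < eta2sq w Xstar)
    (hmin : ∀ X : Fin n → EuclideanSpace ℝ (Fin p),
      xiFun w δ Xstar Y ≤ xiFun w δ X Y) :
    sigma2 w δ Xstar ≤ sigma2 w δ Y := by
  refine sigma2_le_of_omegaFun_nonpos hXstar2 ?_
  calc omegaFun w δ Xstar Y ≤ xiFun w δ Xstar Y := omegaFun_le_xiFun hw hw1 hδ Xstar Y hYd
    _ ≤ xiFun w δ Y Y := hmin Y
    _ = omegaFun w δ Y Y := xiFun_self hw1 Y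
    _ = 0 := omegaFun_self hY2.ne'

/-- Main theorem: any minimizer of the quadratic majorizer `ξ(·,Y)` does not
increase Kruskal's stress formula two, provided `σ₂(Y) ≤ 1`. -/
theorem majorization_update_decreases_stress2
    {n p : ℕ} (hn : 2 ≤ n) (hp : 1 ≤ p)
    (w δ : Fin n → Fin n → ℝ)
    (hw : ∀ i j : Fin n, i < j → 0 ≤ w i j)
    (hw1 : pairSum n w = 1)
    (hδ : ∀ i j : Fin n, i < j → 0 ≤ δ i j)
    (Y : Fin n → EuclideanSpace ℝ (Fin p))
    (hY2 : 0 < eta2sq w Y)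
    (hY1 : sigma2 w δ Y ≤ 1)
    (hYd : ∀ i j : Fin n, i < j → 0 < w i j → 0 < confDist Y i j)
    (Xstar : Fin n → EuclideanSpace ℝ (Fin p))
    (hXstar2 : 0 < eta2sq w Xstar)
    (hmin : ∀ X : Fin n → EuclideanSpace ℝ (Fin p),
      xiFun w δ Xstar Y ≤ xiFun w δ X Y) :
    sigma2 w δ Xstar ≤ sigma2 w δ Y :=
  majorization_update_decreases_stress2_general w δ hw hw1 hδ Y hY2 hYd Xstar hXstar2 hmin
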